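/- Let d ≡ 1 (mod 4) be a positive non-square integer, let ω_d = (1+√d)/2 = [a_0; a_1, a_2, …] be its simple continued fraction expansion with minimal period l′ and convergents p_n/q_n. Then for every n ≥ 0, |p_n² − p_n·q_n − q_n²·(d−1)/4| = 1 if and only if n + 1 is a multiple of l′. -/

import Mathlib

/-!
Write `α_n` for the complete quotients of `θ`, with `θ ^ 2 = θ + c`, and
`N_n = p_n² - p_n q_n - c q_n²` for the norm of `p_n - q_n θ`. Since
`θ = (p_n α_{n+1} + p_{n-1}) / (q_n α_{n+1} + q_{n-1})` with a unimodular matrix, `α_{n+1} - θ` is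
an integer exactly when `N_n` equals the determinant `(-1)^(n+1)`; as `p_n - q_n θ` has sign
`(-1)^(n+1)` and its conjugate is positive, this happens exactly when `|N_n| = 1`. Finally
`α_{n+1} - θ ∈ ℤ` means `α_{n+2} = α_1`, i.e. `α_1` is a periodic point of `x ↦ 1 / fract x` of
period `n + 1`; since an irrational number is determined by its partial quotients (it is the limit
of its convergents), the minimal such period is `l'`.
-/

/-- The `n`-th total quotient `α_n` of the continued fraction expansion of `θ`:
`α_0 = θ`, `α_{n+1} = 1/(α_n - ⌊α_n⌋)`. -/
noncomputable def cfAlpha (θ : ℝ) : ℕ → ℝ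
  | 0 => θ
  | n + 1 => 1 / Int.fract (cfAlpha θ n)

/-- The `n`-th partial quotient `a_n` of the continued fraction expansion of `θ`. -/
noncomputable def cfA (θ : ℝ) (n : ℕ) : ℤ := ⌊cfAlpha θ n⌋

/-- Numerators of the convergents of `θ`, shifted by two:
`cfP θ (n+2) = p_n`, with `p_{-2} = 0`, `p_{-1} = 1`, `p_n = a_n p_{n-1} + p_{n-2}`. -/
noncomputable def cfP (θ : ℝ) : ℕ → ℤ
  | 0 => 0
  | 1 => 1
  | n + 2 => cfA θ n * cfP θ (n + 1) + cfP θ n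

/-- Denominators of the convergents of `θ`, shifted by two:
`cfQ θ (n+2) = q_n`, with `q_{-2} = 1`, `q_{-1} = 0`, `q_n = a_n q_{n-1} + q_{n-2}`. -/
noncomputable def cfQ (θ : ℝ) : ℕ → ℤ
  | 0 => 1
  | 1 => 0
  | n + 2 => cfA θ n * cfQ θ (n + 1) + cfQ θ n

open Function

noncomputable def cfMap (x : ℝ) : ℝ := 1 / Int.fract x

lemma cfAlpha_eq_iterate (θ : ℝ) (n : ℕ) : cfAlpha θ n = cfMap^[n] θ := by
  induction n with
  | zero => rfl
  | succ n ih => rw [iterate_succ_apply', ← ih]; rfl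

lemma cfAlpha_add (θ : ℝ) (m k : ℕ) : cfAlpha θ (m + k) = cfAlpha (cfAlpha θ k) m := by
  simp only [cfAlpha_eq_iterate, iterate_add_apply]

lemma cfA_add (θ : ℝ) (m k : ℕ) : cfA θ (m + k) = cfA (cfAlpha θ k) m := by
  rw [cfA, cfA, cfAlpha_add]

lemma cfMap_eq_cfMap_iff {x y : ℝ} : cfMap x = cfMap y ↔ ∃ z : ℤ, x = y + z := by
  simp only [cfMap, one_div, inv_inj, Int.fract_eq_fract, sub_eq_iff_eq_add']

lemma Irrational.fract_pos {x : ℝ} (h : Irrational x) : 0 < Int.fract x :=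
  Int.fract_pos.mpr (h.ne_int _)

lemma Irrational.cfMap {x : ℝ} (h : Irrational x) : Irrational (cfMap x) := by
  rw [_root_.cfMap, one_div, ← Int.self_sub_floor]
  exact (h.sub_intCast _).inv

lemma Irrational.cfAlpha {θ : ℝ} (h : Irrational θ) (n : ℕ) : Irrational (cfAlpha θ n) := by
  induction n with
  | zero => exact h
  | succ n ih => exact ih.cfMap

lemma one_lt_cfMap {x : ℝ} (h : Irrational x) : 1 < cfMap x := by
  rw [cfMap, one_lt_div h.fract_pos]
  exact Int.fract_lt_one x

lemma one_le_cfA {θ : ℝ} (h : Irrational θ) (hθ : 1 ≤ θ) (n : ℕ) : 1 ≤ cfA θ n := by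
  rw [cfA, Int.le_floor, Int.cast_one]
  cases n with
  | zero => exact hθ
  | succ n => exact (one_lt_cfMap (h.cfAlpha n)).le

lemma GenContFract.of_s_get?_of_irrational {x : ℝ} (h : Irrational x) (n : ℕ) :
    (GenContFract.of x).s.get? n = some ⟨1, (cfA x (n + 1) : ℝ)⟩ := by
  induction n generalizing x with
  | zero =>
    have hhead := GenContFract.of_s_head h.fract_pos.ne'
    rw [inv_eq_one_div] at hhead
    exact hhead
  | succ n ih =>
    rw [GenContFract.of_s_succ, inv_eq_one_div, cfA_add _ _ 1]
    exact ih h.cfMap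

lemma eq_of_cfA_eq {x y : ℝ} (hx : Irrational x) (hy : Irrational y)
    (h : ∀ n, cfA x n = cfA y n) : x = y := by
  have hof : GenContFract.of x = GenContFract.of y := by
    ext1
    · rw [GenContFract.of_h_eq_floor, GenContFract.of_h_eq_floor]
      exact congrArg Int.cast (h 0)
    · ext1 n
      rw [GenContFract.of_s_get?_of_irrational hx, GenContFract.of_s_get?_of_irrational hy, h]
  exact tendsto_nhds_unique (GenContFract.of_convergence x)
    (hof ▸ GenContFract.of_convergence y)

lemma isPeriodicPt_cfMap_iff {x : ℝ} (h : Irrational x) (p : ℕ) :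
    IsPeriodicPt cfMap p x ↔ ∀ m, cfA x (m + p) = cfA x m := by
  refine ⟨fun hp m => ?_, fun hA => ?_⟩
  · rw [cfA_add, cfAlpha_eq_iterate x p, hp.eq]
  · refine eq_of_cfA_eq (by simpa only [cfAlpha_eq_iterate] using h.cfAlpha p) h fun m => ?_
    rw [← hA, cfA_add, cfAlpha_eq_iterate]

lemma minimalPeriod_eq_of_isLeast {α : Type*} {f : α → α} {x : α} {l : ℕ}
    (h : IsLeast {p | 0 < p ∧ IsPeriodicPt f p x} l) : minimalPeriod f x = l :=
  le_antisymm (h.1.2.minimalPeriod_le h.1.1)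
    (h.2 ⟨h.1.2.minimalPeriod_pos h.1.1, isPeriodicPt_minimalPeriod f x⟩)

lemma isPeriodicPt_cfAlpha_one_iff_cfA {θ : ℝ} (h : Irrational θ) (p : ℕ) :
    IsPeriodicPt cfMap p (cfAlpha θ 1) ↔ ∀ n, 1 ≤ n → cfA θ (n + p) = cfA θ n := by
  rw [isPeriodicPt_cfMap_iff (h.cfAlpha 1)]
  refine ⟨fun hA n hn => ?_, fun hA m => ?_⟩
  · obtain ⟨m, rfl⟩ := Nat.exists_eq_add_of_le' hn
    rw [add_right_comm, cfA_add θ (m + p) 1, cfA_add θ m 1]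
    exact hA m
  · have h := hA (m + 1) (Nat.le_add_left 1 m)
    rwa [add_right_comm, cfA_add θ (m + p) 1, cfA_add θ m 1] at h

lemma isPeriodicPt_cfAlpha_one_iff_exists_int (θ : ℝ) (n : ℕ) :
    IsPeriodicPt cfMap (n + 1) (cfAlpha θ 1) ↔ ∃ U : ℤ, cfAlpha θ (n + 1) = θ + U := by
  change cfMap^[n + 1] (cfMap θ) = cfMap θ ↔ _
  rw [← iterate_succ_apply, iterate_succ_apply', ← cfAlpha_eq_iterate, cfMap_eq_cfMap_iff]

lemma cfP_mul_cfQ_sub_cfP_mul_cfQ (θ : ℝ) (n : ℕ) :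
    cfP θ (n + 1) * cfQ θ n - cfP θ n * cfQ θ (n + 1) = (-1) ^ n := by
  induction n with
  | zero => simp [cfP, cfQ]
  | succ n ih =>
    rw [cfP, cfQ, pow_succ]
    linear_combination (-1 : ℤ) * ih

lemma one_le_cfP {θ : ℝ} (h : Irrational θ) (hθ : 1 ≤ θ) (n : ℕ) :
    1 ≤ cfP θ (n + 1) := by
  induction n using Nat.twoStepInduction with
  | zero => simp [cfP]
  | one => simpa [cfP] using one_le_cfA h hθ 0
  | more n ih ih1 =>
    rw [cfP]
    nlinarith [one_le_cfA h hθ (n + 1)]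

lemma cfQ_nonneg {θ : ℝ} (h : Irrational θ) (hθ : 1 ≤ θ) (n : ℕ) : 0 ≤ cfQ θ n := by
  induction n using Nat.twoStepInduction with
  | zero => simp [cfQ]
  | one => simp [cfQ]
  | more n ih ih1 =>
    rw [cfQ]
    nlinarith [one_le_cfA h hθ n]

lemma cfAlpha_eq_cfA_add (θ : ℝ) (n : ℕ) :
    cfAlpha θ n = cfA θ n + 1 / cfAlpha θ (n + 1) := by
  rw [cfAlpha, one_div_one_div, cfA, Int.fract, add_sub_cancel]

/-- `θ = (p_{n-1} α_n + p_{n-2}) / (q_{n-1} α_n + q_{n-2})`, with denominators cleared. -/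
lemma mul_cfQ_cfAlpha_add_cfQ {θ : ℝ} (h : Irrational θ) (n : ℕ) :
    θ * (cfQ θ (n + 1) * cfAlpha θ n + cfQ θ n) = cfP θ (n + 1) * cfAlpha θ n + cfP θ n := by
  induction n with
  | zero => simp [cfP, cfQ, cfAlpha]
  | succ n ih =>
    have hα : cfAlpha θ (n + 1) ≠ 0 := (h.cfAlpha (n + 1)).ne_zero
    rw [cfAlpha_eq_cfA_add θ n] at ih
    rw [cfP, cfQ]
    push_cast
    field_simp at ih
    linear_combination ih

lemma cfP_sub_cfQ_mul_mul_cfAlpha {θ : ℝ} (h : Irrational θ) (n : ℕ) :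
    (cfP θ (n + 2) - cfQ θ (n + 2) * θ) * cfAlpha θ (n + 1) =
      -(cfP θ (n + 1) - cfQ θ (n + 1) * θ) := by
  linear_combination -mul_cfQ_cfAlpha_add_cfQ h (n + 1)

lemma neg_one_pow_mul_cfP_sub_cfQ_mul_pos {θ : ℝ} (h : Irrational θ) (n : ℕ) :
    0 < (-1) ^ n * (cfP θ (n + 1) - cfQ θ (n + 1) * θ) := by
  induction n with
  | zero => simp [cfP, cfQ]
  | succ n ih =>
    have hα : 0 < cfAlpha θ (n + 1) := one_pos.trans (one_lt_cfMap (h.cfAlpha n))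
    have hrec := cfP_sub_cfQ_mul_mul_cfAlpha h n
    refine (mul_pos_iff_of_pos_right hα).mp ?_
    rw [mul_assoc, hrec, pow_succ]
    linarith

lemma Int.abs_eq_one_iff_eq_of_mul_pos {N δ : ℤ} (hδ : δ = 1 ∨ δ = -1) (h : 0 < δ * N) :
    |N| = 1 ↔ N = δ := by
  rw [abs_eq zero_le_one]
  rcases hδ with rfl | rfl <;> omega

section Quadratic

variable {θ : ℝ} {c : ℤ}

lemma Irrational.eq_zero_of_intCast_add_intCast_mul_eq_zero (h : Irrational θ) {a b : ℤ}
    (hab : (a : ℝ) + b * θ = 0) : a = 0 ∧ b = 0 := by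
  obtain rfl : b = 0 := by
    by_contra hb
    exact ((h.intCast_mul hb).intCast_add a).ne_zero hab
  simpa using hab

/-- `1 - θ` is the conjugate of `θ`, so this is the norm form of `ℤ[θ]`. -/
lemma intCast_norm_eq_mul (hθ : θ ^ 2 = θ + c) (p q : ℤ) :
    ((p ^ 2 - p * q - q ^ 2 * c : ℤ) : ℝ) = (p - q * θ) * (p - q * (1 - θ)) := by
  push_cast
  linear_combination q ^ 2 * hθ

lemma exists_int_eq_add_iff_norm_eq_det (hirr : Irrational θ) (hθ : θ ^ 2 = θ + c)
    {p q p' q' : ℤ} {α : ℝ} (hα : θ * (q * α + q') = p * α + p')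
    (hne : (p : ℝ) - q * θ ≠ 0) (hdet : (p * q' - p' * q) ^ 2 = 1) :
    (∃ U : ℤ, α = θ + U) ↔ p ^ 2 - p * q - q ^ 2 * c = p * q' - p' * q := by
  constructor
  · rintro ⟨U, rfl⟩
    have hlin :
        ((q * c - p * U - p' : ℤ) : ℝ) + ((q * U + q + q' - p : ℤ) : ℝ) * θ = 0 := by
      push_cast
      linear_combination hα - q * hθ
    obtain ⟨h₀, h₁⟩ := hirr.eq_zero_of_intCast_add_intCast_mul_eq_zero hlin
    linear_combination -p * h₁ - q * h₀
  · intro hN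
    -- the unique solution of `q U = p - q - q'`, `p U = q c - p'`, found by Cramer's rule
    set U := (p * q' - p' * q) * (q' * (q * c - p') - p' * (p - q - q'))
    have hqU : q * U = p - q - q' := by
      linear_combination (p - q - q') * hdet - (p * q' - p' * q) * q' * hN
    have hpU : p * U = q * c - p' := by
      linear_combination (q * c - p') * hdet - (p * q' - p' * q) * p' * hN
    refine ⟨U, mul_right_cancel₀ hne ?_⟩
    have hqU' : (q : ℝ) * U = p - q - q' := by exact_mod_cast hqU
    have hpU' : (p : ℝ) * U = q * c - p' := by exact_mod_cast hpU
    linear_combination -hα + q * hθ - hpU' + θ * hqU'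

theorem abs_norm_cfP_cfQ_eq_one_iff (hirr : Irrational θ) (h1 : 1 < θ) (hθ : θ ^ 2 = θ + c)
    (n : ℕ) :
    |cfP θ (n + 2) ^ 2 - cfP θ (n + 2) * cfQ θ (n + 2) - cfQ θ (n + 2) ^ 2 * c| = 1 ↔
      IsPeriodicPt cfMap (n + 1) (cfAlpha θ 1) := by
  set p := cfP θ (n + 2)
  set q := cfQ θ (n + 2)
  have hdet : p * cfQ θ (n + 1) - cfP θ (n + 1) * q = (-1) ^ (n + 1) :=
    cfP_mul_cfQ_sub_cfP_mul_cfQ θ (n + 1)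
  have hsign := neg_one_pow_mul_cfP_sub_cfQ_mul_pos hirr (n + 1)
  have hconj : 0 < (p : ℝ) - q * (1 - θ) := by
    have hp : (1 : ℝ) ≤ p := by exact_mod_cast one_le_cfP hirr h1.le (n + 1)
    have hq : (0 : ℝ) ≤ q := by exact_mod_cast cfQ_nonneg hirr h1.le (n + 2)
    nlinarith
  have hpos : 0 < (-1) ^ (n + 1) * (p ^ 2 - p * q - q ^ 2 * c) := by
    have : (0 : ℝ) < ((-1) ^ (n + 1) * (p ^ 2 - p * q - q ^ 2 * c) : ℤ) := by
      rw [Int.cast_mul, intCast_norm_eq_mul hθ, ← mul_assoc]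
      push_cast
      exact mul_pos hsign hconj
    exact_mod_cast this
  rw [Int.abs_eq_one_iff_eq_of_mul_pos (neg_one_pow_eq_or ℤ (n + 1)) hpos, ← hdet,
    ← exists_int_eq_add_iff_norm_eq_det hirr hθ (mul_cfQ_cfAlpha_add_cfQ hirr (n + 1))
      (right_ne_zero_of_mul hsign.ne') (by rw [hdet, ← pow_mul', (even_two_mul _).neg_one_pow]),
    isPeriodicPt_cfAlpha_one_iff_exists_int]

end Quadratic

theorem stmt_7_general (d : ℕ) (hns : ¬ IsSquare d) (hd4 : d % 4 = 1) (l' : ℕ)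
    (hl : IsLeast {p : ℕ | 0 < p ∧ ∀ n, 1 ≤ n →
      cfA ((1 + Real.sqrt d) / 2) (n + p) = cfA ((1 + Real.sqrt d) / 2) n} l') (n : ℕ) :
    |cfP ((1 + Real.sqrt d) / 2) (n + 2) ^ 2
        - cfP ((1 + Real.sqrt d) / 2) (n + 2) * cfQ ((1 + Real.sqrt d) / 2) (n + 2)
        - cfQ ((1 + Real.sqrt d) / 2) (n + 2) ^ 2 * (((d : ℤ) - 1) / 4)| = 1 ↔
      l' ∣ (n + 1) := by
  set θ : ℝ := (1 + Real.sqrt d) / 2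
  have hsqrt : Irrational (Real.sqrt d) := irrational_sqrt_natCast_iff.mpr hns
  have hirr : Irrational θ := by
    simpa [θ] using (hsqrt.intCast_add 1).div_intCast (m := 2) two_ne_zero
  have hd1 : 1 < d := by
    have : d ≠ 1 := by
      rintro rfl
      exact hns ⟨1, rfl⟩
    omega
  have h1 : 1 < θ := by
    have : 1 < Real.sqrt d := Real.lt_sqrt_of_sq_lt (by exact_mod_cast (by omega : 1 ^ 2 < d))
    simp only [θ]; linarith
  have hθ : θ ^ 2 = θ + (((d : ℤ) - 1) / 4 : ℤ) := by
    have hc : ((((d : ℤ) - 1) / 4 : ℤ) : ℝ) = ((d : ℝ) - 1) / 4 := by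
      rw [Int.cast_div (by omega) (by norm_num)]; push_cast; ring
    rw [hc]
    linear_combination Real.sq_sqrt (Nat.cast_nonneg (α := ℝ) d) / 4
  have hmin : minimalPeriod cfMap (cfAlpha θ 1) = l' :=
    minimalPeriod_eq_of_isLeast (by simpa only [isPeriodicPt_cfAlpha_one_iff_cfA hirr] using hl)
  rw [abs_norm_cfP_cfQ_eq_one_iff hirr h1 hθ, ← hmin, isPeriodicPt_iff_minimalPeriod_dvd]

/-- for a positive non-square integer `d ≡ 1 (mod 4)`, `ω_d = (1+√d)/2`, with
minimal period `l'` of the continued fraction of `ω_d` and convergents `p_n/q_n`: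
for every `n ≥ 0`, `|p_n² - p_n q_n - q_n² (d-1)/4| = 1` iff `l' ∣ n + 1`. -/
theorem stmt_7 (d : ℕ) (hd : 0 < d) (hns : ¬ IsSquare d) (hd4 : d % 4 = 1) (l' : ℕ)
    (hl : IsLeast {p : ℕ | 0 < p ∧ ∀ n, 1 ≤ n →
      cfA ((1 + Real.sqrt d) / 2) (n + p) = cfA ((1 + Real.sqrt d) / 2) n} l') (n : ℕ) :
    |cfP ((1 + Real.sqrt d) / 2) (n + 2) ^ 2
        - cfP ((1 + Real.sqrt d) / 2) (n + 2) * cfQ ((1 + Real.sqrt d) / 2) (n + 2)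
        - cfQ ((1 + Real.sqrt d) / 2) (n + 2) ^ 2 * (((d : ℤ) - 1) / 4)| = 1 ↔
      l' ∣ (n + 1) :=
  stmt_7_general d hns hd4 l' hl n
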